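/- arXiv:1506.01458 — 2 statements merged into one kernel-verified Lean document; each statement's English description precedes it below -/
import Mathlib

section
/- Let G be a finite group of characteristic p and P a p-subgroup of G. Then the normalizer N_G(P) is of characteristic p. -/
variable (p : ℕ) (G : Type*) [Group G]

/-- `O_p(G)`: the join of all normal `p`-subgroups of `G` (the largest normal `p`-subgroup
when `G` is finite). -/
def pCore : Subgroup G :=
  ⨆ H : {H : Subgroup G // H.Normal ∧ IsPGroup p H}, H.1

/-- `O_{p'}(G)`: the join of all normal subgroups of order coprime to `p` (the largest normal
`p'`-subgroup when `G` is finite). -/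
def pPrimeCore : Subgroup G :=
  ⨆ H : {H : Subgroup G // H.Normal ∧ Nat.Coprime (Nat.card H) p}, H.1

lemma iSup_normal {G : Type*} [Group G] {ι : Sort*} (H : ι → Subgroup G)
    (h : ∀ i, (H i).Normal) : (⨆ i, H i).Normal := by
  constructor
  intro n hn g
  refine Subgroup.iSup_induction (C := fun x => g * x * g⁻¹ ∈ ⨆ i, H i) H hn
    (fun i x hx => ?_) ?_ (fun x y hx hy => ?_)
  · exact Subgroup.mem_iSup_of_mem i ((h i).conj_mem x hx g)
  · simpa using Subgroup.one_mem (⨆ i, H i)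
  · have e : g * (x * y) * g⁻¹ = (g * x * g⁻¹) * (g * y * g⁻¹) := by group
    show g * (x * y) * g⁻¹ ∈ ⨆ i, H i
    rw [e]; exact mul_mem hx hy

instance pCore_normal : (pCore p G).Normal := iSup_normal _ (fun i => i.2.1)

instance pPrimeCore_normal : (pPrimeCore p G).Normal := iSup_normal _ (fun i => i.2.1)

/-- A group `G` is of characteristic `p` if `C_G(O_p(G)) ≤ O_p(G)`. -/
def IsCharP : Prop :=
  Subgroup.centralizer ((pCore p G : Subgroup G) : Set G) ≤ pCore p G

/-- A group `G` is almost of characteristic `p` if `G/O_{p'}(G)` is of characteristic `p`. -/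
def IsAlmostCharP : Prop := IsCharP p (G ⧸ pPrimeCore p G)

/-!
Let `N = N_G(P)`, `Q = O_p(G)`, and let `x ∈ C_N(O_p(N))` have order prime to `p`. Both `P` and
`Q ∩ N` are normal `p`-subgroups of `N`, so `x` centralizes `P` and `C_Q(P)`. Thompson's
`P × Q`-lemma then shows that `x` centralizes `Q`, so `x ∈ C_G(Q) ≤ Q` and `x = 1`. Hence
`C_N(O_p(N))` is a normal `p`-subgroup of `N` and lies in `O_p(N)`.

For the `P × Q`-lemma: if `x` did not centralize `Q`, the `p`-group `A` would fix a coset `vD ≠ D`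
of `D = C_Q(x)`. Then `A` centralizes `[x, v]`, hence so does `x`, which forces
`[x, v] ^ orderOf x = 1`, so `[x, v] = 1` as `Q` is a `p`-group.
-/

open Subgroup
open scoped commutatorElement

section Commutator

variable {G : Type*} [Group G]

theorem commute_commutatorElement_of_conj_eq_mul {a x v d : G} (hax : Commute a x)
    (hdx : Commute d x) (hv : a * v * a⁻¹ = v * d) : Commute a ⁅x, v⁆ := by
  refine mul_inv_eq_iff_eq_mul.mp ?_
  calc a * ⁅x, v⁆ * a⁻¹ = ⁅a * x * a⁻¹, a * v * a⁻¹⁆ := by simp only [commutatorElement_def]; group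
    _ = x * v * (d * x⁻¹ * d⁻¹) * v⁻¹ := by rw [hax.mul_inv_cancel, hv]; group
    _ = ⁅x, v⁆ := by rw [hdx.inv_right.mul_inv_cancel, commutatorElement_def]

theorem commutatorElement_pow_orderOf_eq_one {x v : G} (h : Commute x ⁅x, v⁆) :
    ⁅x, v⁆ ^ orderOf x = 1 := by
  have hconj : v * x⁻¹ * v⁻¹ = x⁻¹ * ⁅x, v⁆ := by rw [commutatorElement_def]; group
  have := congrArg (· ^ orderOf x) hconj
  simpa only [conj_pow, h.inv_left.mul_pow, inv_pow, pow_orderOf_eq_one, inv_one, mul_one,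
    mul_inv_cancel, one_mul] using this.symm

end Commutator

section PGroup

variable {p : ℕ} {G : Type*} [Group G]

theorem IsPGroup.eq_one_of_coprime_orderOf (hG : IsPGroup p G) {g : G}
    (hg : (orderOf g).Coprime p) : g = 1 :=
  orderOf_eq_one_iff.mp ((Nat.coprime_self _).mp (hG.orderOf_coprime hg.symm g))

theorem IsPGroup.of_forall_coprime_orderOf [Fact p.Prime] [Finite G]
    (h : ∀ g : G, (orderOf g).Coprime p → g = 1) : IsPGroup p G := by
  have hp : p.Prime := Fact.out
  refine IsPGroup.of_card
    (Nat.eq_prime_pow_of_unique_prime_dvd Nat.card_pos.ne' fun {r} hr hrG ↦ ?_)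
  have : Fact r.Prime := ⟨hr⟩
  obtain ⟨g, hg⟩ := exists_prime_orderOf_dvd_card' r hrG
  by_contra hrp
  have hg1 : g = 1 := h g (hg ▸ (Nat.coprime_primes hr hp).mpr hrp)
  exact hr.ne_one (by rw [← hg, hg1, orderOf_one])

theorem IsPGroup.exists_notMem_forall_inv_mul_smul_mem [Fact p.Prime] {A Q : Type*} [Group A]
    [Group Q] [Finite Q] [MulDistribMulAction A Q] (hA : IsPGroup p A) (hQ : IsPGroup p Q)
    {D : Subgroup Q} (hD : D ≠ ⊤) (hAD : ∀ a : A, ∀ d ∈ D, a • d ∈ D) :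
    ∃ v ∉ D, ∀ a : A, v⁻¹ * a • v ∈ D := by
  have : MulAction.QuotientAction A D :=
    ⟨fun a v w h ↦ by simpa only [smul_inv', smul_mul'] using hAD a _ h⟩
  have hpD : p ∣ D.index := by
    obtain ⟨n, hn⟩ := hQ.index D
    rcases n with _ | n
    · exact absurd (index_eq_one.mp hn) hD
    · exact hn ▸ dvd_pow_self p n.succ_ne_zero
  obtain ⟨w, hw, hw1⟩ := hA.exists_fixed_point_of_prime_dvd_card_of_fixed_point (Q ⧸ D) hpD
    (a := ((1 : Q) : Q ⧸ D)) fun a ↦ by rw [MulAction.Quotient.smul_coe, smul_one]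
  induction w using QuotientGroup.induction_on with | H v => ?_
  refine ⟨v, fun hv ↦ hw1 (QuotientGroup.eq.mpr (by simpa using hv)), fun a ↦ ?_⟩
  have hva := hw a
  rw [MulAction.Quotient.smul_coe, QuotientGroup.eq] at hva
  simpa using inv_mem hva

/-- Thompson's `P × Q`-lemma. -/
theorem IsPGroup.mem_centralizer_of_commute_inf_centralizer [Fact p.Prime] [Finite G]
    {Q A : Subgroup G} [Q.Normal] (hQ : IsPGroup p Q) (hA : IsPGroup p A) {x : G}
    (hx : (orderOf x).Coprime p) (hxA : x ∈ centralizer (A : Set G))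
    (hxQA : ∀ v ∈ Q ⊓ centralizer (A : Set G), Commute x v) : x ∈ centralizer (Q : Set G) := by
  by_contra hxQ
  let : MulDistribMulAction A Q :=
    MulDistribMulAction.compHom Q ((MulAut.conjNormal (H := Q)).comp A.subtype)
  have smul_coe (a : A) (v : Q) : ((a • v : Q) : G) = a * v * a⁻¹ := rfl
  have hAx (a : A) : Commute (a : G) x := hxA a a.2
  have hD : (centralizer {x}).subgroupOf Q ≠ ⊤ := by
    rw [Ne, subgroupOf_eq_top]
    exact fun h ↦ hxQ fun v hv ↦ mem_centralizer_singleton_iff.mp (h hv)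
  have hAD (a : A) (d : Q) (hd : d ∈ (centralizer {x}).subgroupOf Q) :
      a • d ∈ (centralizer {x}).subgroupOf Q := by
    have hdx : Commute (d : G) x := mem_centralizer_singleton_iff.mp hd
    exact mem_centralizer_singleton_iff.mpr
      (smul_coe a d ▸ ((hAx a).mul_left hdx).mul_left (hAx a).inv_left).eq
  obtain ⟨v, hvx, hv⟩ := hA.exists_notMem_forall_inv_mul_smul_mem hQ hD hAD
  have hvA : ⁅x, (v : G)⁆ ∈ centralizer (A : Set G) := fun a ha ↦
    (commute_commutatorElement_of_conj_eq_mul (hAx ⟨a, ha⟩)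
      (mem_centralizer_singleton_iff.mp (hv ⟨a, ha⟩))
      (by simp only [coe_subtype, coe_mul, coe_inv, smul_coe]; group)).eq
  have hvQ : ⁅x, (v : G)⁆ ∈ Q :=
    mul_mem (Normal.conj_mem ‹_› _ v.2 x) (inv_mem v.2)
  have hpow := commutatorElement_pow_orderOf_eq_one (hxQA _ ⟨hvQ, hvA⟩)
  have h1 : ⁅x, (v : G)⁆ = 1 := congrArg Subtype.val (hQ.eq_one_of_coprime_orderOf
    (g := ⟨_, hvQ⟩) (hx.coprime_dvd_left (orderOf_mk _ hvQ ▸ orderOf_dvd_of_pow_eq_one hpow)))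
  exact hvx <| mem_centralizer_singleton_iff.mpr (commutatorElement_eq_one_iff_commute.mp h1).eq.symm

end PGroup

section PCore

variable {p : ℕ} {G : Type*} [Group G]

theorem le_pCore {H : Subgroup G} [H.Normal] (hH : IsPGroup p H) : H ≤ pCore p G :=
  le_iSup (fun H : {H : Subgroup G // H.Normal ∧ IsPGroup p H} ↦ H.1) ⟨H, ‹_›, hH⟩

theorem pCore_le_sylow (S : Sylow p G) : pCore p G ≤ S :=
  iSup_le fun H ↦ have := H.2.1; H.2.2.le_sylow_of_normal S

theorem isPGroup_pCore [Fact p.Prime] [Finite G] : IsPGroup p (pCore p G) :=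
  (default : Sylow p G).isPGroup'.to_le (pCore_le_sylow _)

end PCore

/-- If `G` is a finite group of characteristic `p` and `P` is a `p`-subgroup of `G`, then
`N_G(P)` is of characteristic `p`. -/
theorem isCharP_normalizer (p : ℕ) [Fact p.Prime] (G : Type*) [Group G] [Finite G]
    (hG : IsCharP p G) (P : Subgroup G) (hP : IsPGroup p P) :
    IsCharP p (Subgroup.normalizer (P : Set G)) := by
  set N := normalizer (P : Set G)
  have hPN : P.subgroupOf N ≤ pCore p N := le_pCore hP.comap_subtype
  have hQN : (pCore p G).subgroupOf N ≤ pCore p N := le_pCore isPGroup_pCore.comap_subtype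
  refine le_pCore (IsPGroup.of_forall_coprime_orderOf fun c hc ↦ ?_)
  have hcR (g : G) (hg : g ∈ N) (hgR : (⟨g, hg⟩ : N) ∈ pCore p N) : Commute g (c : N) :=
    (congrArg Subtype.val (c.2 ⟨g, hg⟩ hgR) :)
  have hcQ : ((c : N) : G) ∈ pCore p G := hG <|
    isPGroup_pCore.mem_centralizer_of_commute_inf_centralizer hP
      (by rwa [orderOf_coe, orderOf_coe])
      (fun a ha ↦ hcR a (le_normalizer ha) (hPN ha))
      (fun v hv ↦ (hcR v (centralizer_le_normalizer _ hv.2) (hQN hv.1)).symm)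
  have hc1 : ((c : N) : G) = 1 := congrArg Subtype.val <|
    isPGroup_pCore.eq_one_of_coprime_orderOf (g := ⟨_, hcQ⟩)
      (by rwa [orderOf_mk, orderOf_coe, orderOf_coe])
  exact Subtype.ext (Subtype.ext hc1)
end

section
/- Let G be a finite group with O_{p'}(G) = Θ, let P be a p-subgroup of G, and write ḡ for the image of g in G/Θ. Then the normalizer of the image of P in G/Θ equals the image of N_G(P), i.e. N_{G/Θ}(P̄) = (N_G(P))¯. -/
variable (p : ℕ) (G : Type*) [Group G]

/-! If `gΘ` normalizes `P̄`, then `g` normalizes `PΘ`. Because `Θ` is a `p'`-group, `P` and `gPg⁻¹`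
are Sylow `p`-subgroups of `PΘ`, hence conjugate by some `k ∈ PΘ` (Frattini argument), so
`g ∈ Θ · N_G(P)`. That `O_{p'}(G)` is itself a `p'`-group holds because the normal `p'`-subgroups
are closed under joins: `|NH| = |H| · [NH : H]` and `[NH : H]` divides `|N|`. -/

open Subgroup QuotientGroup Pointwise

section

variable {p G}

theorem Subgroup.card_mul_relIndex {H K : Subgroup G} (h : H ≤ K) :
    Nat.card H * H.relIndex K = Nat.card K := by
  simpa only [relIndex_bot_left] using relIndex_mul_relIndex ⊥ H K bot_le h

variable [Finite G]

theorem Subgroup.relIndex_sup_dvd_card {N H Q : Subgroup G} [N.Normal] (hQ : Q ≤ N ⊔ H)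
    (hcard : Nat.card Q = Nat.card H) : Q.relIndex (N ⊔ H) ∣ Nat.card N := by
  obtain ⟨c, hc⟩ : N.relIndex H ∣ Nat.card Q := hcard ▸ relIndex_dvd_card N H
  have h : N.relIndex H * (c * Q.relIndex (N ⊔ H)) = N.relIndex H * Nat.card N := by
    rw [← mul_assoc, ← hc, card_mul_relIndex hQ, ← card_mul_relIndex le_sup_left,
      relIndex_sup_left, mul_comm]
  have hpos : 0 < N.relIndex H := Nat.pos_of_ne_zero (N.subgroupOf H).index_ne_zero_of_finite
  exact Dvd.intro_left c (Nat.eq_of_mul_eq_mul_left hpos h)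

theorem Subgroup.coprime_card_sup {N H : Subgroup G} [N.Normal] (hN : (Nat.card N).Coprime p)
    (hH : (Nat.card H).Coprime p) : (Nat.card ↥(N ⊔ H)).Coprime p := by
  rw [← card_mul_relIndex le_sup_right]
  exact Nat.Coprime.mul_left hH (hN.coprime_dvd_left (relIndex_sup_dvd_card le_sup_right rfl))

theorem coprime_card_pPrimeCore : (Nat.card (pPrimeCore p G)).Coprime p := by
  let S : Set (Subgroup G) := {H | H.Normal ∧ (Nat.card H).Coprime p}
  have hS : SupClosed S := fun N ⟨_, hN⟩ H ⟨_, hH⟩ => ⟨inferInstance, coprime_card_sup hN hH⟩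
  exact (hS.iSup_mem (f := fun H : S => H.1) ⟨inferInstance, by simp⟩ fun H => H.2).2

theorem Subgroup.exists_mem_conj_smul_eq_of_not_dvd_relIndex [Fact p.Prime] {K P Q : Subgroup G}
    (hP : IsPGroup p P) (hQ : IsPGroup p Q) (hPK : P ≤ K) (hQK : Q ≤ K)
    (hPi : ¬ p ∣ P.relIndex K) (hQi : ¬ p ∣ Q.relIndex K) :
    ∃ k ∈ K, MulAut.conj k • Q = P := by
  obtain ⟨k, hk⟩ := MulAction.exists_smul_eq K (hQ.comap_subtype.toSylow hQi)
    (hP.comap_subtype.toSylow hPi)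
  refine ⟨k, k.2, ?_⟩
  have hk' : MulAut.conj k • Q.subgroupOf K = P.subgroupOf K := congrArg Sylow.toSubgroup hk
  rwa [conj_smul_subgroupOf hQK, subgroupOf_inj, inf_of_le_left (conj_smul_le_of_le hQK k),
    inf_of_le_left hPK] at hk'

theorem Subgroup.normalizer_sup_le_sup_normalizer [Fact p.Prime] {N P : Subgroup G} [N.Normal]
    (hN : (Nat.card N).Coprime p) (hP : IsPGroup p P) :
    normalizer ((N ⊔ P : Subgroup G) : Set G) ≤ N ⊔ normalizer (P : Set G) := by
  intro g hg
  have hgP : MulAut.conj g • P ≤ N ⊔ P := by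
    rw [← mem_normalizer_iff_map_conj_eq.mp hg]
    exact pointwise_smul_le_pointwise_smul_iff.mpr le_sup_right
  have hsylow {Q : Subgroup G} (hQ : Q ≤ N ⊔ P) (hcard : Nat.card Q = Nat.card P) :
      ¬ p ∣ Q.relIndex (N ⊔ P) :=
    (Nat.Prime.coprime_iff_not_dvd Fact.out).mp
      (hN.coprime_dvd_left (relIndex_sup_dvd_card hQ hcard)).symm
  obtain ⟨k, hk, hconj⟩ := exists_mem_conj_smul_eq_of_not_dvd_relIndex hP (hP.map _)
    le_sup_right hgP (hsylow le_sup_right rfl)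
    (hsylow hgP (Nat.card_congr (equivSMul _ P).toEquiv).symm)
  have hkg : k * g ∈ normalizer (P : Set G) := by
    rw [mem_normalizer_iff_map_conj_eq, map_mul]
    exact (mul_smul _ _ P).trans hconj
  rw [← inv_mul_cancel_left k g]
  exact mul_mem (sup_le_sup_left le_normalizer N (inv_mem hk)) (mem_sup_right hkg)

theorem QuotientGroup.normalizer_map_mk'_eq [Fact p.Prime] {N P : Subgroup G} [N.Normal]
    (hN : (Nat.card N).Coprime p) (hP : IsPGroup p P) :
    normalizer ((P.map (mk' N) : Subgroup (G ⧸ N)) : Set (G ⧸ N)) =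
      (normalizer (P : Set G)).map (mk' N) := by
  have hf := mk'_surjective N
  refine le_antisymm ?_ (le_normalizer_map _)
  rw [← comap_le_comap_of_surjective hf, comap_normalizer_eq_of_surjective _ hf, comap_map_mk',
    comap_map_mk']
  exact normalizer_sup_le_sup_normalizer hN hP

end

/-- Let `G` be a finite group, `Θ = O_{p'}(G)` and `P` a `p`-subgroup of `G`. Then
`N_{G/Θ}(P̄) = (N_G(P))¯`. -/
theorem normalizer_map_quotient (p : ℕ) [Fact p.Prime] (G : Type*) [Group G] [Finite G]
    (P : Subgroup G) (hP : IsPGroup p P) :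
    Subgroup.normalizer ((Subgroup.map (QuotientGroup.mk' (pPrimeCore p G)) P : Subgroup _) : Set _) =
      Subgroup.map (QuotientGroup.mk' (pPrimeCore p G)) (Subgroup.normalizer (P : Set G)) :=
  QuotientGroup.normalizer_map_mk'_eq coprime_card_pPrimeCore hP
end
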